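/- Suppose λ^{r+1} − λ^r = ρ A z^{r+1} and G^r + Aᵀλ^{r+1} + ρ L⁺(z^{r+1} − z^r) = 0 hold for all r, where L⁺ is symmetric. If λ^{r+1} − λ^r lies in the column space of A with σ_min the smallest nonzero eigenvalue of AᵀA, then ‖λ^{r+1} − λ^r‖² ≤ (3/σ_min)(‖G^r − h^r‖² + ‖h^r − G^{r−1}‖² + ρ²‖L⁺ w^r‖²), where h^r is any vector and w^r := (z^{r+1} − z^r) − (z^r − z^{r−1}). -/

import Mathlib

/-!
Subtracting the primal optimality condition at step `r - 1` from the one at step `r` gives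
`Aᵀ (λʳ⁺¹ - λʳ) = -((Gʳ - hʳ) + (hʳ - Gʳ⁻¹) + ρ L⁺ wʳ)`, whose squared norm is at most three
times the sum of the three squared norms. Writing `λʳ⁺¹ - λʳ = A x` and expanding `x` in an
orthonormal eigenbasis of `AᵀA`, every eigenvalue `μ` is either `0` or at least `σ_min`, so
`σ_min ‖A x‖² = σ_min ⟪x, AᵀA x⟫ ≤ ‖AᵀA x‖²`.
-/

open Matrix

namespace Matrix

variable {ι κ : Type*} [Fintype ι] [Fintype κ]

theorem dotProduct_self_eq_sum_sq {R : Type*} [CommSemiring R] (v : ι → R) :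
    v ⬝ᵥ v = ∑ i, v i ^ 2 := by
  simp only [dotProduct, sq]

theorem dotProduct_self_add_add_le {R : Type*} [CommRing R] [LinearOrder R]
    [IsStrictOrderedRing R] (x y w : ι → R) :
    (x + y + w) ⬝ᵥ (x + y + w) ≤ 3 * (x ⬝ᵥ x + y ⬝ᵥ y + w ⬝ᵥ w) := by
  simp only [dotProduct, Finset.mul_sum, ← Finset.sum_add_distrib]
  refine Finset.sum_le_sum fun i _ => ?_
  simp only [Pi.add_apply]
  nlinarith [sq_nonneg (x i - y i), sq_nonneg (x i - w i), sq_nonneg (y i - w i)]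

namespace IsHermitian

variable [DecidableEq ι] {M : Matrix ι ι ℝ} (hM : M.IsHermitian)

theorem dotProduct_eigenvectorBasis_mulVec (x : ι → ℝ) (i : ι) :
    M *ᵥ x ⬝ᵥ hM.eigenvectorBasis i = hM.eigenvalues i * (x ⬝ᵥ hM.eigenvectorBasis i) := by
  rw [dotProduct_comm, dotProduct_mulVec, ← mulVec_transpose,
    ← conjTranspose_eq_transpose_of_trivial, hM.eq, mulVec_eigenvectorBasis, smul_dotProduct,
    smul_eq_mul, dotProduct_comm]

theorem mul_dotProduct_mulVec_le {σ : ℝ} (hσ : 0 ≤ σ)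
    (hσμ : ∀ i, hM.eigenvalues i ≠ 0 → σ ≤ hM.eigenvalues i) (x : ι → ℝ) :
    σ * (x ⬝ᵥ M *ᵥ x) ≤ M *ᵥ x ⬝ᵥ M *ᵥ x := by
  set b := hM.eigenvectorBasis
  have parseval : ∀ u v : ι → ℝ, u ⬝ᵥ v = ∑ i, (u ⬝ᵥ b i) * (v ⬝ᵥ b i) := fun u v => by
    simpa only [EuclideanSpace.inner_eq_star_dotProduct, star_trivial, dotProduct_comm,
      real_inner_comm] using (b.sum_inner_mul_inner (WithLp.toLp 2 u) (WithLp.toLp 2 v)).symm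
  rw [parseval x, parseval (M *ᵥ x), Finset.mul_sum]
  refine Finset.sum_le_sum fun i _ => ?_
  rw [hM.dotProduct_eigenvectorBasis_mulVec]
  rcases eq_or_ne (hM.eigenvalues i) 0 with h0 | h0
  · simp [h0]
  · have hσle := hσμ i h0
    have hμpos : 0 < hM.eigenvalues i := lt_of_le_of_ne (hσ.trans hσle) h0.symm
    nlinarith [mul_nonneg (mul_nonneg hμpos.le (sq_nonneg (x ⬝ᵥ b i))) (sub_nonneg.2 hσle)]

end IsHermitian

theorem mul_dotProduct_self_le_transpose_mulVec_mulVec (A : Matrix κ ι ℝ) {σ : ℝ} (hσ : 0 ≤ σ)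
    (hσμ : ∀ μ : ℝ, μ ≠ 0 → (∃ x : ι → ℝ, x ≠ 0 ∧ (Aᵀ * A) *ᵥ x = μ • x) → σ ≤ μ)
    (x : ι → ℝ) :
    σ * (A *ᵥ x ⬝ᵥ A *ᵥ x) ≤ Aᵀ *ᵥ (A *ᵥ x) ⬝ᵥ Aᵀ *ᵥ (A *ᵥ x) := by
  classical
  have hM : (Aᵀ * A).IsHermitian := by
    simpa only [conjTranspose_eq_transpose_of_trivial] using isHermitian_conjTranspose_mul_self A
  have hσμ' : ∀ i, hM.eigenvalues i ≠ 0 → σ ≤ hM.eigenvalues i := fun i hi =>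
    hσμ _ hi ⟨_, (WithLp.ofLp_eq_zero 2).ne.2 (hM.eigenvectorBasis.orthonormal.ne_zero i),
      hM.mulVec_eigenvectorBasis i⟩
  have hquad : x ⬝ᵥ (Aᵀ * A) *ᵥ x = A *ᵥ x ⬝ᵥ A *ᵥ x := by
    rw [← mulVec_mulVec, dotProduct_transpose_mulVec, dotProduct_comm]
  simpa only [hquad, mulVec_mulVec] using hM.mul_dotProduct_mulVec_le hσ hσμ' x

end Matrix

theorem transpose_mulVec_sub_eq {m n : Type*} [Fintype m] [Fintype n]
    (A : Matrix m n ℝ) (L : Matrix n n ℝ) (ρ : ℝ) (z : ℕ → n → ℝ) (lam : ℕ → m → ℝ)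
    (G : ℕ → n → ℝ)
    (hprimal : ∀ r, G r + Aᵀ *ᵥ lam (r + 1) + ρ • L *ᵥ (z (r + 1) - z r) = 0)
    (g : n → ℝ) (r : ℕ) :
    Aᵀ *ᵥ (lam (r + 2) - lam (r + 1)) =
      -((G (r + 1) - g) + (g - G r) + ρ • L *ᵥ ((z (r + 2) - z (r + 1)) - (z (r + 1) - z r))) := by
  have hnext := hprimal (r + 1)
  have hprev := hprimal r
  rw [mulVec_sub, mulVec_sub, smul_sub]
  linear_combination hnext - hprev

theorem stmt_12_general (m n : ℕ) (A : Matrix (Fin m) (Fin n) ℝ)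
    (ρ : ℝ) (Lplus : Matrix (Fin n) (Fin n) ℝ)
    (z : ℕ → Fin n → ℝ) (lam : ℕ → Fin m → ℝ) (G : ℕ → Fin n → ℝ)
    (hprimal : ∀ r, G r + Aᵀ.mulVec (lam (r + 1))
      + ρ • Lplus.mulVec (z (r + 1) - z r) = 0)
    (σmin : ℝ) (hσpos : 0 < σmin)
    (hσmin : ∀ μ : ℝ, μ ≠ 0 →
      (∃ x : Fin n → ℝ, x ≠ 0 ∧ (Aᵀ * A).mulVec x = μ • x) → σmin ≤ μ)
    (hrange : ∀ r, ∃ x : Fin n → ℝ, lam (r + 1) - lam r = A.mulVec x)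
    (h : ℕ → Fin n → ℝ) (r : ℕ) (hr : 1 ≤ r) :
    ∑ i, (lam (r + 1) - lam r) i ^ 2 ≤ (3 / σmin) *
      ((∑ j, (G r - h r) j ^ 2) + (∑ j, (h r - G (r - 1)) j ^ 2)
        + ρ ^ 2 * ∑ j, (Lplus.mulVec ((z (r + 1) - z r) - (z r - z (r - 1)))) j ^ 2) := by
  obtain ⟨k, rfl⟩ := Nat.exists_eq_add_of_le' hr
  obtain ⟨x, hx⟩ := hrange (k + 1)
  set w := (z (k + 2) - z (k + 1)) - (z (k + 1) - z k)
  have hspec := A.mul_dotProduct_self_le_transpose_mulVec_mulVec hσpos.le hσmin x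
  rw [← hx, transpose_mulVec_sub_eq A Lplus ρ z lam G hprimal (h (k + 1)) k,
    neg_dotProduct_neg] at hspec
  have hsplit :=
    dotProduct_self_add_add_le (G (k + 1) - h (k + 1)) (h (k + 1) - G k) (ρ • Lplus *ᵥ w)
  rw [smul_dotProduct, dotProduct_smul, smul_smul, ← sq, smul_eq_mul] at hsplit
  simp only [Nat.add_sub_cancel, ← dotProduct_self_eq_sum_sq]
  rw [div_mul_eq_mul_div, le_div_iff₀ hσpos, mul_comm]
  exact hspec.trans hsplit

/-- Bound on the dual successive difference of the primal-dual iteration. -/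
theorem stmt_12 (m n : ℕ) (A : Matrix (Fin m) (Fin n) ℝ) (ρ : ℝ) (hρ : 0 < ρ)
    (Lplus : Matrix (Fin n) (Fin n) ℝ) (hsym : Lplus.IsSymm)
    (z : ℕ → Fin n → ℝ) (lam : ℕ → Fin m → ℝ) (G : ℕ → Fin n → ℝ)
    (hdual : ∀ r, lam (r + 1) - lam r = ρ • A.mulVec (z (r + 1)))
    (hprimal : ∀ r, G r + Aᵀ.mulVec (lam (r + 1))
      + ρ • Lplus.mulVec (z (r + 1) - z r) = 0)
    (σmin : ℝ) (hσpos : 0 < σmin)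
    (hσmin : ∀ μ : ℝ, μ ≠ 0 →
      (∃ x : Fin n → ℝ, x ≠ 0 ∧ (Aᵀ * A).mulVec x = μ • x) → σmin ≤ μ)
    (hrange : ∀ r, ∃ x : Fin n → ℝ, lam (r + 1) - lam r = A.mulVec x)
    (h : ℕ → Fin n → ℝ) (r : ℕ) (hr : 1 ≤ r) :
    ∑ i, (lam (r + 1) - lam r) i ^ 2 ≤ (3 / σmin) *
      ((∑ j, (G r - h r) j ^ 2) + (∑ j, (h r - G (r - 1)) j ^ 2)
        + ρ ^ 2 * ∑ j, (Lplus.mulVec ((z (r + 1) - z r) - (z r - z (r - 1)))) j ^ 2) :=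
  stmt_12_general m n A ρ Lplus z lam G hprimal σmin hσpos hσmin hrange h r hr
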